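/- For any nonempty closed hemispherical subset W of S^{n+1}, the spherical convex hull of W equals its double spherical polar: s-conv(W) = (s-conv(W))°°. -/

import Mathlib

/-!
Let `C` be the convex cone spanned by `W`. Hemisphericity puts `W` in an open half-space, so
the convex hull of `W` is a compact set (Carathéodory) avoiding `0`, which makes `C` closed and
gives `s-conv(W) = C ∩ S^{n+1}`. The polar of a set is its inner dual cone cut with the sphere,
and the inner dual of a cone only depends on its trace on the sphere, so
`s-conv(W)°° = C** ∩ S^{n+1} = C ∩ S^{n+1}` by the bipolar theorem for closed convex cones.
-/

open scoped RealInnerProductSpace BigOperators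
open Real

namespace Sph

/-- Ambient Euclidean space `ℝ^{n+2}` containing the sphere `S^{n+1}`. -/
abbrev E (n : ℕ) := EuclideanSpace ℝ (Fin (n + 2))

/-- The unit sphere `S^{n+1} ⊂ ℝ^{n+2}`. -/
def sph (n : ℕ) : Set (E n) := {x | ‖x‖ = 1}

/-- The closed hemisphere `H(P)` centered at `P`. -/
def hemi {n : ℕ} (P : E n) : Set (E n) := {Q | ‖Q‖ = 1 ∧ 0 ≤ ⟪P, Q⟫}

/-- The boundary `∂H(P)` of the hemisphere centered at `P`. -/
def hemiBdry {n : ℕ} (P : E n) : Set (E n) := {Q | ‖Q‖ = 1 ∧ ⟪P, Q⟫ = 0}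

/-- Geodesic (angular) distance on the unit sphere. -/
noncomputable def gdist {n : ℕ} (P Q : E n) : ℝ := Real.arccos ⟪P, Q⟫

/-- Radial normalization of a vector. -/
noncomputable def nmz {n : ℕ} (x : E n) : E n := ‖x‖⁻¹ • x

/-- The geodesic arc joining `P` and `Q`. -/
noncomputable def arc {n : ℕ} (P Q : E n) : Set (E n) :=
  {X | ∃ t ∈ Set.Icc (0 : ℝ) 1, X = nmz ((1 - t) • P + t • Q)}

/-- A subset of the sphere is hemispherical if it misses some closed hemisphere. -/
def Hemispherical {n : ℕ} (W : Set (E n)) : Prop := ∃ P ∈ sph n, W ∩ hemi P = ∅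

/-- Spherical convexity: a subset of the sphere closed under geodesic arcs. -/
noncomputable def SphConvex {n : ℕ} (W : Set (E n)) : Prop :=
  W ⊆ sph n ∧ ∀ P ∈ W, ∀ Q ∈ W, arc P Q ⊆ W

/-- Interior of `W` relative to the sphere. -/
def sphInterior {n : ℕ} (W : Set (E n)) : Set (E n) :=
  {X | X ∈ W ∧ ∃ U : Set (E n), IsOpen U ∧ X ∈ U ∧ U ∩ sph n ⊆ W}

/-- Frontier of `W` relative to the sphere. -/
def sphFrontier {n : ℕ} (W : Set (E n)) : Set (E n) :=
  closure W ∩ closure (sph n \ W)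

/-- A spherical convex body: closed, hemispherical, spherically convex,
with an interior point. -/
noncomputable def SphConvexBody {n : ℕ} (W : Set (E n)) : Prop :=
  IsClosed W ∧ Hemispherical W ∧ SphConvex W ∧ (sphInterior W).Nonempty

/-- The hemisphere `H(P)` supports `W`. -/
noncomputable def Supports {n : ℕ} (W : Set (E n)) (P : E n) : Prop :=
  P ∈ sph n ∧ W ⊆ hemi P ∧ (sphFrontier W ∩ hemiBdry P).Nonempty

/-- The width of `W` determined by the supporting hemisphere `H(P)`:
the minimum thickness `π - |PQ|` of lunes `H(P) ∩ H(Q)` over supporting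
hemispheres `H(Q)` (so that `W ⊆ H(P) ∩ H(Q)`). -/
noncomputable def widthAt {n : ℕ} (W : Set (E n)) (P : E n) : ℝ :=
  sInf {d | ∃ Q, Supports W Q ∧ d = π - gdist P Q}

/-- `W` is of constant width `ρ`. -/
noncomputable def ConstWidth {n : ℕ} (W : Set (E n)) (ρ : ℝ) : Prop :=
  ∀ P, Supports W P → widthAt W P = ρ

/-- The spherical polar set `W° = ⋂_{P ∈ W} H(P)` (as a subset of the sphere). -/
def polar {n : ℕ} (W : Set (E n)) : Set (E n) :=
  {Q | ‖Q‖ = 1 ∧ ∀ P ∈ W, 0 ≤ ⟪P, Q⟫}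

/-- The diameter of `W`: the supremum of geodesic distances between its points. -/
noncomputable def diam {n : ℕ} (W : Set (E n)) : ℝ :=
  sSup {d | ∃ P ∈ W, ∃ Q ∈ W, d = gdist P Q}

/-- The spherical convex hull: normalized nonnegative convex combinations. -/
noncomputable def sconv {n : ℕ} (W : Set (E n)) : Set (E n) :=
  {X | ∃ (k : ℕ) (t : Fin k → ℝ) (f : Fin k → E n), (∀ i, f i ∈ W) ∧
    (∀ i, 0 ≤ t i) ∧ (∑ i, t i) = 1 ∧ X = nmz (∑ i, t i • f i)}

/-- Embedding `x ↦ (x, 1)` of `ℝ^{n+1}` into `ℝ^{n+2}`. -/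
noncomputable def lift {n : ℕ} (x : EuclideanSpace ℝ (Fin (n + 1))) : E n :=
  (WithLp.equiv 2 (Fin (n + 2) → ℝ)).symm (Fin.snoc (fun i => x i) 1)

/-- The north pole `N = (0, …, 0, 1)`. -/
noncomputable def north (n : ℕ) : E n := EuclideanSpace.single (Fin.last (n + 1)) 1

end Sph

open Sph

section Caratheodory

variable {F : Type*} [AddCommGroup F] [Module ℝ F]

theorem exists_fin_sum_smul_eq_of_mem_convexHull [FiniteDimensional ℝ F] {s : Set F} {x : F}
    (hx : x ∈ convexHull ℝ s) :
    ∃ k ≤ Module.finrank ℝ F + 1, ∃ w ∈ stdSimplex ℝ (Fin k), ∃ z : Fin k → F,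
      (∀ i, z i ∈ s) ∧ ∑ i, w i • z i = x := by
  obtain ⟨ι, _, z, w, hzs, hai, hw0, hw1, rfl⟩ := eq_pos_convex_span_of_mem_convexHull hx
  have hcard : Fintype.card ι ≤ Module.finrank ℝ F + 1 :=
    hai.card_le_finrank_succ.trans (Nat.succ_le_succ (Submodule.finrank_le _))
  let e := (Fintype.equivFin ι).symm
  refine ⟨_, hcard, w ∘ e, ⟨fun i => (hw0 _).le, ?_⟩, z ∘ e, fun i => hzs ⟨_, rfl⟩, ?_⟩
  · simpa only [Function.comp_apply] using (e.sum_comp w).trans hw1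
  · exact e.sum_comp fun i => w i • z i

variable [TopologicalSpace F] [IsTopologicalAddGroup F] [ContinuousSMul ℝ F]
  [FiniteDimensional ℝ F]

theorem IsCompact.convexHull {s : Set F} (hs : IsCompact s) :
    IsCompact (_root_.convexHull ℝ s) := by
  let combo (k : ℕ) (p : (Fin k → ℝ) × (Fin k → F)) : F := ∑ i, p.1 i • p.2 i
  have hcombo : _root_.convexHull ℝ s = ⋃ k ∈ Finset.range (Module.finrank ℝ F + 2),
      combo k '' (stdSimplex ℝ (Fin k) ×ˢ Set.univ.pi fun _ => s) := by
    refine subset_antisymm (fun x hx => ?_) ?_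
    · obtain ⟨k, hk, w, hw, z, hz, rfl⟩ := exists_fin_sum_smul_eq_of_mem_convexHull hx
      exact Set.mem_biUnion (Finset.mem_range.2 (by omega)) ⟨(w, z), ⟨hw, fun i _ => hz i⟩, rfl⟩
    · simp only [Set.iUnion_subset_iff]
      rintro k - _ ⟨⟨w, z⟩, ⟨hw, hz⟩, rfl⟩
      exact (convex_convexHull ℝ s).sum_mem (fun i _ => hw.1 i) hw.2
        fun i _ => subset_convexHull ℝ s (hz i trivial)
  rw [hcombo]
  exact (Finset.range _).isCompact_biUnion fun k _ =>
    ((isCompact_stdSimplex ℝ (Fin k)).prod (isCompact_univ_pi fun _ => hs)).image (by fun_prop)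

end Caratheodory

namespace PointedCone

section

variable {F : Type*} [AddCommGroup F] [Module ℝ F]

theorem exists_pos_smul_mem_convexHull_of_mem_hull {s : Set F} {x : F}
    (hx : x ∈ hull ℝ s) (hx0 : x ≠ 0) : ∃ c : ℝ, 0 < c ∧ ∃ a ∈ convexHull ℝ s, x = c • a := by
  obtain ⟨n, f, g, rfl⟩ := Submodule.mem_span_set'.1 hx
  have hf : 0 < ∑ i, (f i : ℝ) := by
    refine (Finset.sum_nonneg fun i _ => (f i).2).lt_of_ne fun h => hx0 ?_
    have hf0 := (Finset.sum_eq_zero_iff_of_nonneg fun i _ => (f i).2).1 h.symm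
    exact Finset.sum_eq_zero fun i hi => by
      rw [show f i = 0 from Subtype.ext (hf0 i hi), zero_smul]
  refine ⟨_, hf, Finset.univ.centerMass (fun i => (f i : ℝ)) (fun i => (g i : F)),
    Finset.univ.centerMass_mem_convexHull (fun i _ => (f i).2) hf fun i _ => (g i).2, ?_⟩
  rw [Finset.centerMass, smul_inv_smul₀ hf.ne']
  rfl

theorem convexHull_subset_hull (s : Set F) : convexHull ℝ s ⊆ hull ℝ s :=
  convexHull_min subset_hull (hull ℝ s).convex

end

variable {F : Type*} [NormedAddCommGroup F] [NormedSpace ℝ F] [FiniteDimensional ℝ F]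

theorem isClosed_hull_of_isCompact {s : Set F} (hs : IsCompact s)
    (h0 : (0 : F) ∉ convexHull ℝ s) : IsClosed (hull ℝ s : Set F) := by
  have hA := hs.convexHull
  obtain ⟨ε, hε, hball⟩ := Metric.isOpen_iff.1 hA.isClosed.isOpen_compl 0 h0
  have hnorm : ∀ a ∈ convexHull ℝ s, ε ≤ ‖a‖ := fun a ha => by
    by_contra! h
    exact hball (mem_ball_zero_iff.2 h) ha
  -- near `x`, the cone lies in the compact set `{0} ∪ [0, R/ε] • convexHull s`, as `c ε ≤ ‖c • a‖`
  refine isClosed_of_closure_subset fun x hx => ?_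
  set R := ‖x‖ + 1
  set K := insert 0 ((fun p : ℝ × F => p.1 • p.2) '' (Set.Icc 0 (R / ε) ×ˢ convexHull ℝ s))
  have hK : IsCompact K := ((isCompact_Icc.prod hA).image (by fun_prop)).insert 0
  have hKC : K ⊆ hull ℝ s := by
    rintro _ (rfl | ⟨⟨c, a⟩, ⟨hc, ha⟩, rfl⟩)
    · exact zero_mem _
    · exact (hull ℝ s).smul_mem hc.1 (convexHull_subset_hull s ha)
  have hCK : Metric.ball 0 R ∩ (hull ℝ s : Set F) ⊆ K := by
    rintro y ⟨hyR, hy⟩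
    rcases eq_or_ne y 0 with rfl | hy0
    · exact Set.mem_insert _ _
    obtain ⟨c, hc, a, ha, rfl⟩ := exists_pos_smul_mem_convexHull_of_mem_hull hy hy0
    refine Or.inr ⟨(c, a), ⟨⟨hc.le, ?_⟩, ha⟩, rfl⟩
    rw [mem_ball_zero_iff, norm_smul, Real.norm_of_nonneg hc.le] at hyR
    rw [le_div_iff₀ hε]
    nlinarith [hnorm a ha]
  have hxR : x ∈ closure (Metric.ball 0 R ∩ (hull ℝ s : Set F)) :=
    Metric.isOpen_ball.inter_closure ⟨mem_ball_zero_iff.2 (by linarith), hx⟩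
  exact hKC (closure_minimal hCK hK.isClosed hxR)

end PointedCone

namespace ProperCone

variable {H : Type*} [NormedAddCommGroup H] [InnerProductSpace ℝ H] [CompleteSpace H]

theorem innerDual_inter_sphere (C : ProperCone ℝ H) :
    innerDual ((C : Set H) ∩ Metric.sphere 0 1) = innerDual C := by
  refine le_antisymm (fun y hy x hx => ?_) (innerDual_le_innerDual Set.inter_subset_left)
  rcases eq_or_ne x 0 with rfl | hx0
  · simp
  have hxS : ‖x‖⁻¹ • x ∈ (C : Set H) ∩ Metric.sphere 0 1 :=
    ⟨PointedCone.smul_mem C.toSubmodule (inv_nonneg.2 (norm_nonneg x)) hx,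
      by simp [norm_smul, hx0]⟩
  have hxy := mem_innerDual.1 hy hxS
  rw [real_inner_smul_left] at hxy
  exact (mul_nonneg_iff_of_pos_left (by positivity)).1 hxy

end ProperCone

namespace Sph

theorem sph_eq_sphere (n : ℕ) : sph n = Metric.sphere 0 1 := by
  ext x
  simp [sph]

theorem polar_eq_innerDual_inter_sphere {n : ℕ} (X : Set (E n)) :
    polar X = (ProperCone.innerDual X : Set (E n)) ∩ Metric.sphere 0 1 := by
  ext Q
  simp [polar, and_comm]

theorem norm_nmz {n : ℕ} {x : E n} (hx : x ≠ 0) : ‖nmz x‖ = 1 := by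
  simp [nmz, norm_smul, hx]

theorem sconv_eq_image_nmz_convexHull {n : ℕ} (W : Set (E n)) :
    sconv W = nmz '' convexHull ℝ W := by
  ext X
  constructor
  · rintro ⟨k, t, f, hf, ht0, ht1, rfl⟩
    exact ⟨_, (convex_convexHull ℝ W).sum_mem (fun i _ => ht0 i) ht1
      fun i _ => subset_convexHull ℝ W (hf i), rfl⟩
  · rintro ⟨a, ha, rfl⟩
    obtain ⟨k, -, t, ht, f, hf, rfl⟩ := exists_fin_sum_smul_eq_of_mem_convexHull ha
    exact ⟨k, t, f, hf, ht.1, ht.2, rfl⟩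

theorem sconv_eq_hull_inter_sphere {n : ℕ} {W : Set (E n)} (h0 : (0 : E n) ∉ convexHull ℝ W) :
    sconv W = (PointedCone.hull ℝ W : Set (E n)) ∩ Metric.sphere 0 1 := by
  rw [sconv_eq_image_nmz_convexHull]
  ext X
  constructor
  · rintro ⟨a, ha, rfl⟩
    refine ⟨(PointedCone.hull ℝ W).smul_mem (inv_nonneg.2 (norm_nonneg a))
      (PointedCone.convexHull_subset_hull W ha), ?_⟩
    simpa using norm_nmz (ne_of_mem_of_not_mem ha h0)
  · rintro ⟨hX, hX1⟩
    have hX0 : X ≠ 0 := by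
      rintro rfl
      simp at hX1
    obtain ⟨c, hc, a, ha, rfl⟩ := PointedCone.exists_pos_smul_mem_convexHull_of_mem_hull hX hX0
    rw [mem_sphere_zero_iff_norm, norm_smul, Real.norm_of_nonneg hc.le] at hX1
    exact ⟨a, ha, by rw [nmz, eq_inv_of_mul_eq_one_left hX1]⟩

theorem zero_notMem_convexHull_of_hemispherical {n : ℕ} {W : Set (E n)} (hsub : W ⊆ sph n)
    (hh : Hemispherical W) : (0 : E n) ∉ convexHull ℝ W := by
  obtain ⟨P, -, hP⟩ := hh
  have hW : W ⊆ {Q | ⟪P, Q⟫ < 0} := fun Q hQ =>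
    not_le.1 fun h => (Set.eq_empty_iff_forall_notMem.1 hP) Q ⟨hQ, hsub hQ, h⟩
  intro h0
  simpa using convexHull_min hW (convex_halfSpace_lt (innerₗ (E n) P).isLinear 0) h0

end Sph

theorem sconv_eq_double_polar_general {n : ℕ} (W : Set (E n))
    (hcl : IsClosed W) (hsub : W ⊆ sph n) (hh : Hemispherical W) :
    sconv W = polar (polar (sconv W)) := by
  have h0 := zero_notMem_convexHull_of_hemispherical hsub hh
  have hW : IsCompact W := (isCompact_sphere 0 1).of_isClosed_subset hcl (sph_eq_sphere n ▸ hsub)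
  let C : ProperCone ℝ (E n) :=
    ⟨PointedCone.hull ℝ W, PointedCone.isClosed_hull_of_isCompact hW h0⟩
  have hC : sconv W = (C : Set (E n)) ∩ Metric.sphere 0 1 := sconv_eq_hull_inter_sphere h0
  rw [polar_eq_innerDual_inter_sphere, polar_eq_innerDual_inter_sphere, hC,
    ProperCone.innerDual_inter_sphere, ProperCone.innerDual_inter_sphere,
    ProperCone.innerDual_innerDual]

theorem sconv_eq_double_polar {n : ℕ} (W : Set (E n)) (hne : W.Nonempty)
    (hcl : IsClosed W) (hsub : W ⊆ sph n) (hh : Hemispherical W) :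
    sconv W = polar (polar (sconv W)) :=
  sconv_eq_double_polar_general W hcl hsub hh
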